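/- arXiv:2012.07258 — 5 statements merged into one kernel-verified Lean document; each statement's English description precedes it below -/
import Mathlib

section
/- Let A and B be real matrices of the same size. Then rank(A + B) = rank(A) + rank(B) if and only if the column spaces of A and B intersect only in the zero vector and the column spaces of Aᵀ and Bᵀ intersect only in the zero vector. -/
/-!
Since `ran (A + B) ≤ ran A + ran B`, we have
`rank (A + B) + dim (ran A ∩ ran B) ≤ rank A + rank B`, and likewise for the transposes; so
additivity of the rank forces both intersections to vanish. Conversely, disjoint column spaces
give `ker (A + B) = ker A ∩ ker B = ker [A; B]`, hence `rank (A + B) = rank [A; B] = rank [Aᵀ Bᵀ]`,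
and the latter is `dim (ran Aᵀ + ran Bᵀ) = rank A + rank B` when the row spaces are disjoint.
-/

open LinearMap Module Matrix

namespace Matrix

section CommSemiring

variable {R : Type*} [CommSemiring R] {m m₁ m₂ n n₁ n₂ : Type*}

theorem range_mulVecLin_add_le [Fintype n] (A B : Matrix m n R) :
    range (A + B).mulVecLin ≤ range A.mulVecLin ⊔ range B.mulVecLin := by
  rintro _ ⟨v, rfl⟩
  rw [mulVecLin_apply, add_mulVec]
  exact Submodule.add_mem_sup ⟨v, rfl⟩ ⟨v, rfl⟩

theorem range_mulVecLin_fromCols [Fintype n₁] [Fintype n₂] (A : Matrix m n₁ R)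
    (B : Matrix m n₂ R) :
    range (fromCols A B).mulVecLin = range A.mulVecLin ⊔ range B.mulVecLin := by
  rw [range_mulVecLin, range_mulVecLin, range_mulVecLin, ← Submodule.span_union,
    ← Set.Sum.elim_range]
  congr 2
  ext (j | j) i <;> rfl

theorem ker_mulVecLin_fromRows [Fintype n] (A : Matrix m₁ n R) (B : Matrix m₂ n R) :
    ker (fromRows A B).mulVecLin = ker A.mulVecLin ⊓ ker B.mulVecLin := by
  ext v
  simp only [mem_ker, mulVecLin_apply, fromRows_mulVec, Submodule.mem_inf, funext_iff,
    Sum.forall, Sum.elim_inl, Sum.elim_inr, Pi.zero_apply]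

end CommSemiring

theorem ker_mulVecLin_add_of_disjoint {R m n : Type*} [CommRing R] [Fintype n]
    {A B : Matrix m n R} (h : Disjoint (range A.mulVecLin) (range B.mulVecLin)) :
    ker (A + B).mulVecLin = ker A.mulVecLin ⊓ ker B.mulVecLin := by
  refine le_antisymm (fun v hv => ?_) (fun v ⟨hA, hB⟩ => by simp_all [mem_ker])
  rw [mem_ker, mulVecLin_apply, add_mulVec, add_eq_zero_iff_eq_neg, ← mulVec_neg] at hv
  have hAv : A *ᵥ v = 0 := Submodule.disjoint_def.1 h _ ⟨v, rfl⟩ ⟨-v, hv.symm⟩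
  refine Submodule.mem_inf.2 ⟨hAv, ?_⟩
  rw [mem_ker, mulVecLin_apply, ← neg_eq_zero, ← mulVec_neg, ← hv, hAv]

section Field

variable {K : Type*} [Field K] {m m₁ m₂ n n₁ n₂ : Type*}

theorem rank_add_add_finrank_inf_le [Fintype n] (A B : Matrix m n K) :
    (A + B).rank + finrank K ↥(range A.mulVecLin ⊓ range B.mulVecLin) ≤ A.rank + B.rank := by
  have hsup := Submodule.finrank_sup_add_finrank_inf_eq (range A.mulVecLin) (range B.mulVecLin)
  have hle := Submodule.finrank_mono (range_mulVecLin_add_le A B)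
  rw [rank, rank, rank]
  omega

theorem rank_fromCols_add_finrank_inf [Fintype n₁] [Fintype n₂] (A : Matrix m n₁ K)
    (B : Matrix m n₂ K) :
    (fromCols A B).rank + finrank K ↥(range A.mulVecLin ⊓ range B.mulVecLin)
      = A.rank + B.rank := by
  rw [rank, range_mulVecLin_fromCols]
  exact Submodule.finrank_sup_add_finrank_inf_eq _ _

theorem rank_fromRows_add_finrank_inf [Fintype m₁] [Fintype m₂] [Fintype n]
    (A : Matrix m₁ n K) (B : Matrix m₂ n K) :
    (fromRows A B).rank + finrank K ↥(range Aᵀ.mulVecLin ⊓ range Bᵀ.mulVecLin)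
      = A.rank + B.rank := by
  rw [← rank_transpose, transpose_fromRows, rank_fromCols_add_finrank_inf, rank_transpose,
    rank_transpose]

theorem rank_add_eq_rank_fromRows_of_disjoint [Fintype n] {A B : Matrix m n K}
    (h : Disjoint (range A.mulVecLin) (range B.mulVecLin)) :
    (A + B).rank = (fromRows A B).rank := by
  have hsum := finrank_range_add_finrank_ker (A + B).mulVecLin
  have hfromRows := finrank_range_add_finrank_ker (fromRows A B).mulVecLin
  rw [ker_mulVecLin_add_of_disjoint h, ← ker_mulVecLin_fromRows] at hsum
  rw [rank, rank]
  omega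

end Field

end Matrix

theorem rank_add_eq_add_rank_iff {m n : ℕ} (A B : Matrix (Fin m) (Fin n) ℝ) :
    (A + B).rank = A.rank + B.rank ↔
      (LinearMap.range A.mulVecLin ⊓ LinearMap.range B.mulVecLin = ⊥ ∧
       LinearMap.range A.transpose.mulVecLin ⊓ LinearMap.range B.transpose.mulVecLin = ⊥) := by
  have hcols := rank_add_add_finrank_inf_le A B
  have hrows := rank_add_add_finrank_inf_le Aᵀ Bᵀ
  rw [← transpose_add, rank_transpose, rank_transpose, rank_transpose] at hrows
  constructor
  · intro h
    constructor <;> rw [← Submodule.finrank_eq_zero (R := ℝ)] <;> omega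
  · rintro ⟨hcol, hrow⟩
    have hfromRows := rank_fromRows_add_finrank_inf A B
    rw [hrow, finrank_bot, add_zero] at hfromRows
    rw [rank_add_eq_rank_fromRows_of_disjoint (disjoint_iff.2 hcol), hfromRows]
end

section
/- Let M be a real symmetric moment matrix M_d(n) with columns indexed by monomials X^i of degree at most n, and for w ∈ ℝ^d let v(w) be the vector of monomials (w^i)_{|i| ≤ n}. Then w lies in the algebraic variety of M (the common zero set of all polynomials p with p-coefficient vector in ker M) if and only if v(w) lies in the range of M. -/
/-- Multi-indices in `d` variables of total degree at most `n`. -/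
def MIdx (d n : ℕ) : Type := {i : Fin d → Fin (n + 1) // ∑ j, (i j : ℕ) ≤ n}

noncomputable instance (d n : ℕ) : Fintype (MIdx d n) := by
  unfold MIdx; infer_instance

/-- The vector of monomials `w ^ i`, `|i| ≤ n`, evaluated at `w`. -/
def monVec {d n : ℕ} (w : Fin d → ℝ) : MIdx d n → ℝ :=
  fun i => ∏ j, w j ^ (i.1 j : ℕ)

/-!
A moment matrix `(β (i + j))` is symmetric, and for a Hermitian matrix `(ran M)ᗮ = ker M`, so in
finite dimension `ran M = (ker M)ᗮ`. The polynomial with coefficient vector `a` vanishes at `w`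
exactly when `a` is orthogonal to `monVec w`.
-/

open Matrix

theorem Matrix.isSymm_of_apply_add {ι κ α : Type*} [AddCommMagma κ] (f : ι → κ) (β : κ → α) :
    (Matrix.of fun i j => β (f i + f j)).IsSymm :=
  IsSymm.ext fun i j => by simp only [of_apply, add_comm]

theorem Matrix.IsHermitian.mem_range_mulVecLin_iff {ι 𝕜 : Type*} [RCLike 𝕜] [Fintype ι]
    {M : Matrix ι ι 𝕜} (hM : M.IsHermitian) {v : ι → 𝕜} :
    v ∈ LinearMap.range M.mulVecLin ↔ ∀ a, M *ᵥ a = 0 → v ⬝ᵥ star a = 0 := by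
  classical
  set T := M.toEuclideanLin
  have hT : LinearMap.range T = (LinearMap.ker T)ᗮ := by
    rw [← (isSymmetric_toEuclideanLin_iff.mpr hM).orthogonal_range,
      Submodule.orthogonal_orthogonal]
  have hrange : v ∈ LinearMap.range M.mulVecLin ↔ WithLp.toLp 2 v ∈ LinearMap.range T := by
    simp [T, (WithLp.toLp_surjective 2).exists, toLpLin_apply]
  rw [hrange, hT, Submodule.mem_orthogonal]
  simp [T, (WithLp.toLp_surjective 2).forall, toLpLin_apply, EuclideanSpace.inner_toLp_toLp]

theorem mem_variety_iff_mem_range_momentMatrix (d n : ℕ)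
    (β : (Fin d → ℕ) → ℝ) (w : Fin d → ℝ)
    (M : Matrix (MIdx d n) (MIdx d n) ℝ)
    (hM : M = Matrix.of fun i j : MIdx d n => β (fun t => (i.1 t : ℕ) + (j.1 t : ℕ))) :
    (∀ a : MIdx d n → ℝ, M.mulVec a = 0 → ∑ i : MIdx d n, a i * ∏ j, w j ^ (i.1 j : ℕ) = 0)
      ↔ (monVec w : MIdx d n → ℝ) ∈ LinearMap.range M.mulVecLin := by
  have hsymm : M.IsHermitian := by
    rw [hM, isHermitian_iff_isSymm]
    exact isSymm_of_apply_add (fun (i : MIdx d n) t => (i.1 t : ℕ)) β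
  rw [hsymm.mem_range_mulVecLin_iff]
  simp only [star_trivial, dotProduct_comm (monVec w)]
  rfl
end

section
/- Let M be a real symmetric moment matrix M_d(n), w ∈ ℝ^d a point not in the algebraic variety of M, and P(w) = v(w)ᵀ v(w) the rank-one moment matrix at w. Then rank(M + P(w)) = rank(M) + 1. -/
/-- The rank-one moment matrix `P(w) = v(w)ᵀ v(w)`. -/
def rankOneMoment (d n : ℕ) (w : Fin d → ℝ) : Matrix (MIdx d n) (MIdx d n) ℝ :=
  Matrix.of fun i j => monVec (n := n) w i * monVec (n := n) w j

open Matrix in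
theorem rank_add_rankOne_of_not_mem_variety (d n : ℕ)
    (β : (Fin d → ℕ) → ℝ) (w : Fin d → ℝ)
    (M : Matrix (MIdx d n) (MIdx d n) ℝ)
    (hM : M = Matrix.of fun i j : MIdx d n => β (fun t => (i.1 t : ℕ) + (j.1 t : ℕ)))
    (hw : ∃ a : MIdx d n → ℝ, M.mulVec a = 0 ∧
            ∑ i : MIdx d n, a i * ∏ j, w j ^ (i.1 j : ℕ) ≠ 0) :
    (M + rankOneMoment d n w).rank = M.rank + 1 := by
  classical
  obtain ⟨a, hMa, hav⟩ := hw
  set v : MIdx d n → ℝ := monVec (n := n) w with hv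
  have hav' : a ⬝ᵥ v ≠ 0 := hav
  have hvne : v ≠ 0 := by
    intro h
    apply hav'
    rw [h]
    simp [dotProduct]
  -- symmetry of M
  have hsym : Mᵀ = M := by
    rw [hM]
    ext i j
    show β (fun t => (j.1 t : ℕ) + (i.1 t : ℕ)) = β (fun t => (i.1 t : ℕ) + (j.1 t : ℕ))
    congr 1
    funext t
    exact Nat.add_comm _ _
  -- action of the rank-one matrix
  have hP : ∀ x : MIdx d n → ℝ, (rankOneMoment d n w).mulVec x = (v ⬝ᵥ x) • v := by
    intro x
    funext i
    show ∑ j, (v i * v j) * x j = (∑ j, v j * x j) * v i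
    rw [Finset.sum_mul]
    exact Finset.sum_congr rfl fun j _ => by ring
  set S : Submodule ℝ (MIdx d n → ℝ) := LinearMap.range M.mulVecLin with hS
  -- v is not in the range of M
  have hvS : v ∉ S := by
    rintro ⟨x, hx⟩
    apply hav'
    rw [← hx]
    have h1 : a ⬝ᵥ M.mulVec x = M.vecMul a ⬝ᵥ x := Matrix.dotProduct_mulVec a M x
    have h2 : M.vecMul a = M.mulVec a := by
      nth_rewrite 1 [← hsym]
      rw [Matrix.vecMul_transpose]
    rw [Matrix.mulVecLin_apply, h1, h2, hMa]
    simp [dotProduct]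
  -- range of M + P
  have hrange : LinearMap.range (M + rankOneMoment d n w).mulVecLin
      = S ⊔ Submodule.span ℝ {v} := by
    have hvmem : v ∈ LinearMap.range (M + rankOneMoment d n w).mulVecLin := by
      refine ⟨(a ⬝ᵥ v)⁻¹ • a, ?_⟩
      rw [Matrix.mulVecLin_apply, Matrix.mulVec_smul, Matrix.add_mulVec, hMa, hP]
      rw [zero_add, smul_smul]
      have : v ⬝ᵥ a = a ⬝ᵥ v := dotProduct_comm v a
      rw [this, inv_mul_cancel₀ hav', one_smul]
    apply le_antisymm
    · rintro y ⟨x, hx⟩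
      rw [Matrix.mulVecLin_apply, Matrix.add_mulVec, hP] at hx
      rw [← hx]
      exact Submodule.add_mem _
        (Submodule.mem_sup_left ⟨x, rfl⟩)
        (Submodule.mem_sup_right (Submodule.smul_mem _ _ (Submodule.mem_span_singleton_self v)))
    · rw [sup_le_iff]
      constructor
      · rintro y ⟨x, hx⟩
        have : y = (M + rankOneMoment d n w).mulVec x - (v ⬝ᵥ x) • v := by
          rw [Matrix.add_mulVec, hP, ← hx, Matrix.mulVecLin_apply]
          abel
        rw [this]
        exact Submodule.sub_mem _ ⟨x, rfl⟩ (Submodule.smul_mem _ _ hvmem)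
      · rw [Submodule.span_singleton_le_iff_mem]
        exact hvmem
  -- trivial intersection
  have hinf : S ⊓ Submodule.span ℝ {v} = ⊥ := by
    rw [eq_bot_iff]
    rintro x ⟨hxS, hxv⟩
    obtain ⟨r, rfl⟩ := Submodule.mem_span_singleton.mp hxv
    rcases eq_or_ne r 0 with h | h
    · simp [h]
    · exact absurd (by simpa [h] using S.smul_mem r⁻¹ hxS) hvS
  have hdim := Submodule.finrank_sup_add_finrank_inf_eq S (Submodule.span ℝ {v})
  rw [hinf, finrank_bot, finrank_span_singleton hvne, add_zero] at hdim
  show Module.finrank ℝ ↥(LinearMap.range (M + rankOneMoment d n w).mulVecLin)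
      = Module.finrank ℝ ↥(LinearMap.range M.mulVecLin) + 1
  rw [hrange]
  exact hdim
end

section
/- Every truncated moment sequence β = {β_i ∈ ℝ : i ∈ ℤ_+^d, |i| ≤ 2n} admits an interpolating measure: there exist points w₁, …, w_ℓ ∈ ℝ^d and nonzero reals α₁, …, α_ℓ such that β_i = Σ_{k=1}^ℓ α_k w_k^i for all |i| ≤ 2n. -/
/-!
The moment vectors `(w ^ i)_{i ∈ S}` of the points `w ∈ ℝ^d` span the whole space `ℝ^S`: a linear
functional vanishing on all of them is a polynomial with exponents in `S` that vanishes everywhere,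
hence is zero. So every `β` is a finite linear combination of moment vectors of points, i.e. the
moment sequence of a finitely atomic signed measure; dropping the atoms of weight zero leaves
nonzero weights.
-/

open Finset Submodule

theorem Submodule.span_range_eq_top_of_forall_sum_mul_eq_zero {K X ι : Type*} [Field K]
    [Fintype ι] (v : X → ι → K)
    (hv : ∀ c : ι → K, (∀ x, ∑ i, c i * v x i = 0) → c = 0) :
    span K (Set.range v) = ⊤ := by
  classical
  rw [← dualAnnihilator_eq_bot_iff, eq_bot_iff]
  intro φ hφ
  rw [mem_dualAnnihilator] at hφ
  have hφ_single : (fun i => φ (Pi.single i 1)) = 0 := by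
    refine hv _ fun x => ?_
    rw [← hφ (v x) (subset_span ⟨x, rfl⟩), φ.pi_apply_eq_sum_univ]
    refine sum_congr rfl fun i _ => ?_
    rw [smul_eq_mul, mul_comm]
    congr 2
    ext j
    simp [Pi.single_apply, eq_comm]
  exact (mem_bot K).2 <| (Pi.basisFun K ι).ext fun i => by
    simpa using congrFun hφ_single i

theorem MvPolynomial.eq_zero_of_forall_sum_mul_prod_pow_eq_zero {R σ : Type*} [CommRing R]
    [IsDomain R] [Infinite R] [Fintype σ] (S : Finset (σ → ℕ)) (c : S → R)
    (hc : ∀ w : σ → R, ∑ i : S, c i * ∏ j, w j ^ (i : σ → ℕ) j = 0) : c = 0 := by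
  classical
  let toFinsupp : (σ → ℕ) ≃ (σ →₀ ℕ) := Finsupp.equivFunOnFinite.symm
  set p : MvPolynomial σ R := ∑ i : S, monomial (toFinsupp i) (c i)
  have hp : p = 0 := MvPolynomial.funext fun w => by
    simp only [p, map_sum, eval_monomial, map_zero, ← hc w]
    refine sum_congr rfl fun i _ => ?_
    rw [Finsupp.prod_fintype _ _ fun j => pow_zero _]
    rfl
  funext i
  have hcoeff : coeff (toFinsupp i) p = c i := by
    simp only [p, coeff_sum, coeff_monomial, toFinsupp.apply_eq_iff_eq, Subtype.val_inj]
    simp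
  rw [← hcoeff, hp, coeff_zero, Pi.zero_apply]

/-- A finitely supported `μ : (σ → K) →₀ K` is a finitely atomic signed measure on `K^σ`. -/
theorem exists_finsupp_eq_sum_mul_prod_pow {K σ : Type*} [Field K] [Infinite K] [Fintype σ]
    (S : Finset (σ → ℕ)) (β : (σ → ℕ) → K) :
    ∃ μ : (σ → K) →₀ K, ∀ i ∈ S, β i = ∑ w ∈ μ.support, μ w * ∏ j, w j ^ i j := by
  have hspan : span K (Set.range fun (w : σ → K) (i : S) => ∏ j, w j ^ (i : σ → ℕ) j) = ⊤ :=
    span_range_eq_top_of_forall_sum_mul_eq_zero _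
      (MvPolynomial.eq_zero_of_forall_sum_mul_prod_pow_eq_zero S)
  obtain ⟨μ, hμ⟩ := Finsupp.mem_span_range_iff_exists_finsupp.1
    (hspan ▸ mem_top : (fun i : S => β i) ∈ _)
  refine ⟨μ, fun i hi => ?_⟩
  have := congrFun hμ ⟨i, hi⟩
  simpa [Finsupp.sum, Finset.sum_apply] using this.symm

theorem truncated_moment_sequence_has_interpolating_measure (d n : ℕ)
    (β : (Fin d → ℕ) → ℝ) :
    ∃ (ℓ : ℕ) (α : Fin ℓ → ℝ) (w : Fin ℓ → (Fin d → ℝ)),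
      (∀ k, α k ≠ 0) ∧
      ∀ i : Fin d → ℕ, (∑ j, i j) ≤ 2 * n →
        β i = ∑ k, α k * ∏ j, w k j ^ i j := by
  obtain ⟨μ, hμ⟩ := exists_finsupp_eq_sum_mul_prod_pow
    (Fintype.piFinset fun _ : Fin d => range (2 * n + 1)) β
  let e := μ.support.equivFin
  refine ⟨_, fun k => μ (e.symm k), fun k => e.symm k,
    fun k => Finsupp.mem_support_iff.1 (e.symm k).2, fun i hi => ?_⟩
  have hi_box : ∀ j, i j ∈ range (2 * n + 1) := fun j =>
    mem_range_succ_iff.2 <| (single_le_sum (fun _ _ => Nat.zero_le _) (mem_univ j)).trans hi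
  rw [hμ i (Fintype.mem_piFinset.2 hi_box), ← sum_coe_sort]
  exact (e.symm.sum_comp _).symm
end

section
/- If the moment matrix M_d(n)(β) of a truncated moment sequence β of degree 2n is invertible, then β admits an interpolating (signed, finitely atomic) measure on ℝ^d. -/
instance (d n : ℕ) : DecidableEq (MIdx d n) := by
  unfold MIdx; infer_instance

theorem interpolating_measure_of_invertible_momentMatrix (d n : ℕ)
    (β : (Fin d → ℕ) → ℝ)
    (hM : IsUnit (Matrix.of fun i j : MIdx d n =>
            β (fun t => (i.1 t : ℕ) + (j.1 t : ℕ)))) :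
    ∃ (ℓ : ℕ) (α : Fin ℓ → ℝ) (w : Fin ℓ → (Fin d → ℝ)),
      ∀ i : Fin d → ℕ, (∑ j, i j) ≤ 2 * n →
        β i = ∑ k, α k * ∏ j, w k j ^ i j := by
  classical
  set m := 2 * n with hm
  -- index type
  let I := MIdx d m
  -- evaluation vectors
  let e : (Fin d → ℝ) → (I → ℝ) := fun x k => ∏ j, x j ^ (k.1 j : ℕ)
  let b : I → ℝ := fun k => β (fun t => (k.1 t : ℕ))
  -- key: b lies in the span of evaluation vectors
  have hspan : b ∈ Submodule.span ℝ (Set.range e) := by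
    by_contra h
    obtain ⟨φ, hφx, hφbot⟩ :=
      Submodule.exists_dual_map_eq_bot_of_notMem h inferInstance
    -- coefficients of φ
    set c : I → ℝ := fun k => φ (fun j => if k = j then 1 else 0) with hc
    -- the associated polynomial
    let F : I → (Fin d →₀ ℕ) := fun k =>
      Finsupp.equivFunOnFinite.symm (fun t => (k.1 t : ℕ))
    have hFinj : Function.Injective F := by
      intro k k' hkk'
      have h2 : (fun t => (k.1 t : ℕ)) = fun t => (k'.1 t : ℕ) := by
        have := congrArg Finsupp.equivFunOnFinite hkk'
        simpa [F] using this
      apply Subtype.ext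
      funext t
      exact Fin.ext (congrFun h2 t)
    let p : MvPolynomial (Fin d) ℝ := ∑ k : I, MvPolynomial.monomial (F k) (c k)
    have heval : ∀ x : Fin d → ℝ, MvPolynomial.eval x p = φ (e x) := by
      intro x
      have := LinearMap.pi_apply_eq_sum_univ φ (e x)
      rw [this]
      rw [show MvPolynomial.eval x p
          = ∑ k : I, c k * ∏ j, x j ^ (F k j) by
        simp only [p, map_sum, MvPolynomial.eval_monomial]
        refine Finset.sum_congr rfl fun k _ => ?_
        rw [Finsupp.prod_pow]]
      refine Finset.sum_congr rfl fun k _ => ?_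
      have hFk : ∀ j, F k j = (k.1 j : ℕ) := fun j => rfl
      simp only [hFk, smul_eq_mul, e]
      ring
    have hφe : ∀ x : Fin d → ℝ, φ (e x) = 0 := by
      intro x
      have : φ (e x) ∈ Submodule.map φ (Submodule.span ℝ (Set.range e)) :=
        Submodule.mem_map_of_mem (Submodule.subset_span ⟨x, rfl⟩)
      rw [hφbot] at this
      simpa using this
    have hp0 : p = 0 := by
      apply MvPolynomial.funext
      intro x
      rw [heval x, hφe x]
      simp
    have hc0 : ∀ k : I, c k = 0 := by
      intro k
      have := congrArg (MvPolynomial.coeff (F k)) hp0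
      rw [show MvPolynomial.coeff (F k) p = c k by
        simp only [p, MvPolynomial.coeff_sum, MvPolynomial.coeff_monomial]
        rw [Finset.sum_eq_single k]
        · simp
        · intro k' _ hk'
          rw [if_neg (fun hh => hk' (hFinj hh))]
        · intro hk; exact absurd (Finset.mem_univ k) hk] at this
      simpa using this
    -- then φ b = 0, contradiction
    apply hφx
    rw [LinearMap.pi_apply_eq_sum_univ φ b]
    have : ∀ k : I, φ (fun j => if k = j then 1 else 0) = 0 := fun k => hc0 k
    simp [this]
  -- extract the finite combination
  rw [Submodule.mem_span_set'] at hspan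
  obtain ⟨ℓ, α, g, hg⟩ := hspan
  choose w hw using fun k : Fin ℓ => (g k).2
  refine ⟨ℓ, α, w, fun i hi => ?_⟩
  -- the index corresponding to i
  have hib : ∀ j, i j < m + 1 := by
    intro j
    have : i j ≤ ∑ t, i t := Finset.single_le_sum (fun t _ => Nat.zero_le _) (Finset.mem_univ j)
    omega
  let k0 : I := ⟨fun j => ⟨i j, hib j⟩, by simpa using hi⟩
  have h1 : β i = b k0 := by
    simp only [b, k0]
  have h2 : b k0 = ∑ k, α k • (g k : I → ℝ) k0 := by
    rw [← hg]; simp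
  rw [h1, h2]
  refine Finset.sum_congr rfl fun k _ => ?_
  rw [← hw k]
  simp only [e, smul_eq_mul, k0]
end
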